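/- Let T be a metric space with exactly n points (n ≥ 2), let f : T → ℝⁿ be 1-Lipschitz, and let g₁, …, g_n be independent standard Gaussian random variables on a probability space Ω. For ω ∈ Ω define u_ω : T → ℝ by u_ω(t) = Σᵢ₌₁ⁿ f(t)ᵢ · gᵢ(ω), and let Lip(u_ω) denote its Lipschitz constant. Then there is a universal constant C > 0 such that E_Ω[Lip(u_ω)²] ≤ C · log n. -/

import Mathlib

open MeasureTheory ProbabilityTheory Real
open scoped NNReal ENNReal

/-!
Each difference quotient `(u_ω s - u_ω t) / d(s, t)` is `∑ i, w i * g i` with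
`∑ i, w i ^ 2 ≤ 1`, hence 1-sub-Gaussian, and a 1-sub-Gaussian `Y` has
`E exp (Y ^ 2 / 4) ≤ √2`. So the sum `S` of `exp (Y ^ 2 / 4)` over the `N = n²` pairs has
`E S ≤ √2 N`, and bounding each `Y ^ 2` by the tangent line
`x ≤ 4 log (√2 N) - 4 + 4 exp (x / 4) / (√2 N)` gives `E max Y ^ 2 ≤ 4 log (√2 n²) ≤ 12 log n`.
-/

lemma lintegral_exp_sq_div_two_gaussianReal :
    ∫⁻ s, ENNReal.ofReal (exp (s ^ 2 / 2)) ∂gaussianReal 0 2⁻¹ = ENNReal.ofReal √2 := by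
  have hdens : ∀ s : ℝ, gaussianPDF 0 2⁻¹ s * ENNReal.ofReal (exp (s ^ 2 / 2)) =
      ENNReal.ofReal ((√π)⁻¹ * exp (-(1 / 2) * s ^ 2)) := by
    intro s
    rw [gaussianPDF, ← ENNReal.ofReal_mul (gaussianPDFReal_nonneg _ _ _), gaussianPDFReal,
      mul_assoc, ← exp_add]
    have hv : ((2⁻¹ : ℝ≥0) : ℝ) = 2⁻¹ := by norm_num
    rw [hv, show 2 * π * 2⁻¹ = π by ring]
    congr 2
    norm_num
    ring
  rw [gaussianReal_of_var_ne_zero _ (by norm_num),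
    lintegral_withDensity_eq_lintegral_mul _ (measurable_gaussianPDF _ _) (by fun_prop)]
  simp only [Pi.mul_apply, hdens]
  rw [← ofReal_integral_eq_lintegral_ofReal
      ((integrable_exp_neg_mul_sq (by norm_num)).const_mul _)
      (ae_of_all _ fun s => by positivity),
    integral_const_mul, integral_gaussian, div_div_eq_mul_div, div_one, sqrt_mul pi_pos.le,
    inv_mul_cancel_left₀ (sqrt_pos.2 pi_pos).ne']

namespace ProbabilityTheory.HasSubgaussianMGF

variable {Ω : Type*} [MeasurableSpace Ω] {P : Measure Ω} {X : Ω → ℝ}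

lemma mono {c c' : ℝ≥0} (h : HasSubgaussianMGF X c P) (hc : c ≤ c') :
    HasSubgaussianMGF X c' P where
  integrable_exp_mul := h.integrable_exp_mul
  mgf_le t := (h.mgf_le t).trans (exp_le_exp.2 (by gcongr))

lemma of_map_eq_gaussianReal {v : ℝ≥0} (hX : P.map X = gaussianReal 0 v) :
    HasSubgaussianMGF X v P := by
  rw [← id_map_iff (aemeasurable_of_map_neZero (by rw [hX]; infer_instance)), hX]
  exact ⟨integrable_exp_mul_gaussianReal, fun t => by simp [mgf_id_gaussianReal]⟩

-- `exp (y ^ 2 / 4)` is the moment generating function of `𝒩(0, 1/2)` at `y`; exchanging the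
-- two integrals turns the left side into the average of `mgf X P` against `𝒩(0, 1/2)`.
lemma lintegral_exp_sq_div_four_le [SFinite P] (h : HasSubgaussianMGF X 1 P) :
    ∫⁻ ω, ENNReal.ofReal (exp (X ω ^ 2 / 4)) ∂P ≤ ENNReal.ofReal √2 := by
  have hmgf : ∀ y, exp (y ^ 2 / 4) = ∫ s, exp (y * s) ∂gaussianReal 0 2⁻¹ := by
    intro y
    have := congrFun (mgf_id_gaussianReal (μ := 0) (v := 2⁻¹)) y
    simp only [mgf, id] at this
    rw [this]
    congr 1
    push_cast
    ring
  calc ∫⁻ ω, ENNReal.ofReal (exp (X ω ^ 2 / 4)) ∂P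
      = ∫⁻ ω, ∫⁻ s, ENNReal.ofReal (exp (s * X ω)) ∂gaussianReal 0 2⁻¹ ∂P := by
        refine lintegral_congr fun ω => ?_
        rw [hmgf, ofReal_integral_eq_lintegral_ofReal (integrable_exp_mul_gaussianReal _)
          (ae_of_all _ fun s => (exp_pos _).le)]
        simp only [mul_comm]
    _ = ∫⁻ s, ∫⁻ ω, ENNReal.ofReal (exp (s * X ω)) ∂P ∂gaussianReal 0 2⁻¹ :=
        lintegral_lintegral_swap
          (measurable_snd.aemeasurable.mul h.aemeasurable.comp_fst).exp.ennreal_ofReal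
    _ = ∫⁻ s, ENNReal.ofReal (mgf X P s) ∂gaussianReal 0 2⁻¹ := by
        refine lintegral_congr fun s => ?_
        rw [mgf, ofReal_integral_eq_lintegral_ofReal (h.integrable_exp_mul s)
          (ae_of_all _ fun ω => (exp_pos _).le)]
    _ ≤ ∫⁻ s, ENNReal.ofReal (exp (s ^ 2 / 2)) ∂gaussianReal 0 2⁻¹ :=
        lintegral_mono fun s => ENNReal.ofReal_le_ofReal (by simpa using h.mgf_le s)
    _ = ENNReal.ofReal √2 := lintegral_exp_sq_div_two_gaussianReal

lemma integrable_exp_sq_div_four [SFinite P] (h : HasSubgaussianMGF X 1 P) :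
    Integrable (fun ω => exp (X ω ^ 2 / 4)) P := by
  refine ⟨(h.aemeasurable.pow_const 2).div_const 4 |>.exp.aestronglyMeasurable, ?_⟩
  rw [hasFiniteIntegral_iff_ofReal (ae_of_all _ fun ω => (exp_pos _).le)]
  exact h.lintegral_exp_sq_div_four_le.trans_lt ENNReal.ofReal_lt_top

lemma integral_exp_sq_div_four_le [SFinite P] (h : HasSubgaussianMGF X 1 P) :
    ∫ ω, exp (X ω ^ 2 / 4) ∂P ≤ √2 := by
  rw [← ENNReal.ofReal_le_ofReal_iff (sqrt_nonneg 2), ofReal_integral_eq_lintegral_ofReal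
    h.integrable_exp_sq_div_four (ae_of_all _ fun ω => (exp_pos _).le)]
  exact h.lintegral_exp_sq_div_four_le

end ProbabilityTheory.HasSubgaussianMGF

section

variable {Ω : Type*} [MeasurableSpace Ω] {P : Measure Ω}

lemma hasSubgaussianMGF_sum_mul_of_iIndepFun {ι : Type*} [Fintype ι] {g : ι → Ω → ℝ}
    (hind : iIndepFun g P) (hgauss : ∀ i, P.map (g i) = gaussianReal 0 1) {w : ι → ℝ}
    (hw : ∑ i, w i ^ 2 ≤ 1) :
    HasSubgaussianMGF (fun ω => ∑ i, w i * g i ω) 1 P := by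
  have hind' : iIndepFun (fun i ω => w i * g i ω) P :=
    hind.comp (fun i x => w i * x) fun i => measurable_const_mul (w i)
  refine (HasSubgaussianMGF.sum_of_iIndepFun hind' fun i _ =>
    (HasSubgaussianMGF.of_map_eq_gaussianReal (hgauss i)).const_mul (w i)).mono ?_
  rw [← NNReal.coe_le_coe, NNReal.coe_sum, NNReal.coe_one]
  convert hw using 2 with i
  exact mul_one _

lemma sum_sq_div_le_one_of_norm_le {ι : Type*} [Fintype ι] {v : EuclideanSpace ℝ ι} {r : ℝ}
    (h : ‖v‖ ≤ r) : ∑ i, (v i / r) ^ 2 ≤ 1 := by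
  simp_rw [div_pow, ← Finset.sum_div, ← EuclideanSpace.real_norm_sq_eq]
  exact div_le_one_of_le₀ (pow_le_pow_left₀ (norm_nonneg v) h 2) (sq_nonneg r)

lemma le_four_mul_log_sub_four_add_div_mul_exp {N : ℝ} (hN : 0 < N) (x : ℝ) :
    x ≤ 4 * log N - 4 + 4 / N * exp (x / 4) := by
  have h := add_one_le_exp ((x - 4 * log N) / 4)
  rw [sub_div, exp_sub, mul_div_cancel_left₀ _ four_ne_zero, exp_log hN] at h
  rw [div_mul_eq_mul_div, mul_div_assoc]
  linarith

lemma integral_le_four_mul_log_of_le_iSup_sq [IsProbabilityMeasure P] {ι : Type*} [Fintype ι]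
    [Nonempty ι] {Y : ι → Ω → ℝ} (hY : ∀ i, HasSubgaussianMGF (Y i) 1 P) {M : Ω → ℝ}
    (hM0 : ∀ ω, 0 ≤ M ω) (hM : ∀ ω, M ω ≤ ⨆ i, Y i ω ^ 2) :
    ∫ ω, M ω ∂P ≤ 4 * log (√2 * Fintype.card ι) := by
  set N : ℝ := √2 * Fintype.card ι
  have hN : 0 < N := by positivity
  set S : Ω → ℝ := fun ω => ∑ i, exp (Y i ω ^ 2 / 4)
  have hS : Integrable S P := integrable_finsetSum _ fun i _ => (hY i).integrable_exp_sq_div_four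
  have hES : ∫ ω, S ω ∂P ≤ N := by
    rw [integral_finsetSum _ fun i _ => (hY i).integrable_exp_sq_div_four]
    calc ∑ i, ∫ ω, exp (Y i ω ^ 2 / 4) ∂P ≤ ∑ _i : ι, √2 :=
          Finset.sum_le_sum fun i _ => (hY i).integral_exp_sq_div_four_le
      _ = N := by simp [N, mul_comm]
  have hpt (ω : Ω) : M ω ≤ 4 * log N - 4 + 4 / N * S ω := by
    refine (hM ω).trans (ciSup_le fun i =>
      (le_four_mul_log_sub_four_add_div_mul_exp hN _).trans ?_)
    gcongr
    exact Finset.single_le_sum (f := fun i => exp (Y i ω ^ 2 / 4)) (fun j _ => (exp_pos _).le)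
      (Finset.mem_univ i)
  calc ∫ ω, M ω ∂P ≤ ∫ ω, (4 * log N - 4 + 4 / N * S ω) ∂P :=
        integral_mono_of_nonneg (ae_of_all _ hM0) ((integrable_const _).add (hS.const_mul _))
          (ae_of_all _ hpt)
    _ = 4 * log N - 4 + 4 / N * ∫ ω, S ω ∂P := by
        rw [integral_add (integrable_const _) (hS.const_mul _), integral_const, integral_const_mul]
        simp
    _ ≤ 4 * log N - 4 + 4 / N * N := by gcongr
    _ = 4 * log N := by field_simp; ring

end

lemma iSup_iSup_iSup_ne_le_iSup_prod {T : Type*} [Finite T] {F : T × T → ℝ} (hF : 0 ≤ F) :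
    ⨆ s, ⨆ t, ⨆ _ : s ≠ t, F (s, t) ≤ ⨆ p, F p :=
  have hsup : 0 ≤ ⨆ p, F p := Real.iSup_nonneg hF
  Real.iSup_le (fun s => Real.iSup_le (fun t => Real.iSup_le
    (fun _ => le_ciSup (Finite.bddAbove_range F) (s, t)) hsup) hsup) hsup

/-- Let `T` be a metric space with `n ≥ 2` points, `f : T → ℝⁿ` 1-Lipschitz, and
`g₁, …, g_n` independent standard Gaussians on `Ω`. For `ω ∈ Ω` let
`u_ω t = ∑ i, f t i * g i ω`. Then `E[Lip(u_ω)²] ≤ C · log n` for a universal `C > 0`,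
where `Lip(u_ω) = sup_{s ≠ t} |u_ω s − u_ω t| / d(s, t)`. -/
theorem expected_sq_lipschitz_gaussian_image :
    ∃ C : ℝ, 0 < C ∧
      ∀ (n : ℕ), 2 ≤ n →
        ∀ (T : Type*) [MetricSpace T] [Fintype T], Fintype.card T = n →
          ∀ (Ω : Type*) [MeasurableSpace Ω] (P : Measure Ω) [IsProbabilityMeasure P]
            (f : T → EuclideanSpace ℝ (Fin n)) (g : Fin n → Ω → ℝ),
            LipschitzWith 1 f →
            (∀ i, Measurable (g i)) →
            iIndepFun g P →
            (∀ i, P.map (g i) = gaussianReal 0 1) →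
            ∫ ω, (⨆ s : T, ⨆ t : T, ⨆ _ : s ≠ t,
                (|∑ i, (f s i - f t i) * g i ω| / dist s t) ^ 2) ∂P ≤
              C * Real.log n := by
  refine ⟨12, by norm_num, fun n hn T _ _ hT Ω _ P _ f g hf _ hind hgauss => ?_⟩
  have : Nonempty T := Fintype.card_pos_iff.1 (by omega)
  set Y : T × T → Ω → ℝ := fun p ω => ∑ i, (f p.1 - f p.2) i / dist p.1 p.2 * g i ω
  have hY (p : T × T) : HasSubgaussianMGF (Y p) 1 P :=
    hasSubgaussianMGF_sum_mul_of_iIndepFun hind hgauss <| sum_sq_div_le_one_of_norm_le <| by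
      simpa [← dist_eq_norm] using hf.dist_le_mul p.1 p.2
  have hquot (s t : T) (ω : Ω) :
      (|∑ i, (f s i - f t i) * g i ω| / dist s t) ^ 2 = Y (s, t) ω ^ 2 := by
    rw [div_pow, sq_abs, ← div_pow, Finset.sum_div]
    simp [Y, div_mul_eq_mul_div]
  have hn2 : (2 : ℝ) ≤ n := by exact_mod_cast hn
  have hsqrt2 : √2 ≤ n := sqrt_le_iff.2 ⟨by positivity, by nlinarith⟩
  calc ∫ ω, (⨆ s : T, ⨆ t : T, ⨆ _ : s ≠ t,
        (|∑ i, (f s i - f t i) * g i ω| / dist s t) ^ 2) ∂P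
      ≤ 4 * log (√2 * Fintype.card (T × T)) := by
        refine integral_le_four_mul_log_of_le_iSup_sq hY
          (fun ω => Real.iSup_nonneg fun s => Real.iSup_nonneg fun t => Real.iSup_nonneg
            fun _ => sq_nonneg _) fun ω => ?_
        simp only [hquot]
        exact iSup_iSup_iSup_ne_le_iSup_prod (F := fun p => Y p ω ^ 2) fun p => sq_nonneg _
    _ ≤ 4 * log ((n : ℝ) ^ 3) := by
        rw [Fintype.card_prod, hT, Nat.cast_mul, ← sq, pow_succ' _ 2]
        gcongr
    _ = 12 * log n := by rw [log_pow]; push_cast; ring
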